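/- Let q = (τ⁺, τ⁻, ℘) be a couple. For every nonempty subset P ⊆ ℘ there exist p₁, p₂ ∈ ℘ such that ⋂_{p ∈ P} A_p = A_{p₁} ∩ A_{p₂}. Consequently, the family U^q = {A_{p₁} ∩ A_{p₂} : p₁, p₂ ∈ ℘} is a base for the topology on the nodes of q generated by the sets {A_p : p ∈ ℘}. -/
import Mathlib


noncomputable section
open scoped Classical

namespace WickNLS

/-! ## Ternary trees, signed ternary trees and couples -/

/-- Ternary trees: every non-leaf (branching) node has three ordered children. -/
inductive TTree : Type
  | leaf : TTree
  | node : TTree → TTree → TTree → TTree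
deriving DecidableEq

namespace TTree

/-- The order of a ternary tree: the number of its branching nodes. -/
def order : TTree → ℕ
  | leaf => 0
  | node a b c => order a + order b + order c + 1

/-- The subtree of `t` at the path `p` from the root (child indices `0,1,2` denote the
left, middle and right child, respectively), if `p` is a valid path. -/
def sub : TTree → List (Fin 3) → Option TTree
  | t, [] => some t
  | leaf, _ :: _ => none
  | node a b c, i :: p => sub (if i = 0 then a else if i = 1 then b else c) p

/-- `p` is (the path of) a node of `t`. -/
def valid (t : TTree) (p : List (Fin 3)) : Prop := (t.sub p).isSome = true

/-- `p` is (the path of) a leaf node of `t`. -/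
def isLeaf (t : TTree) (p : List (Fin 3)) : Prop := t.sub p = some leaf

/-- `p` is (the path of) a branching node of `t`. -/
def isBranch (t : TTree) (p : List (Fin 3)) : Prop := ∃ a b c, t.sub p = some (node a b c)

/-- Replace the subtree at the path `p` by `r`. -/
def replace : TTree → List (Fin 3) → TTree → TTree
  | _, [], r => r
  | leaf, _ :: _, _ => leaf
  | node a b c, i :: p, r =>
      if i = 0 then node (replace a p r) b c
      else if i = 1 then node a (replace b p r) c
      else node a b (replace c p r)

end TTree

/-- The sign `ι` of the node at path `p` of a signed ternary tree whose root carries the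
sign `σ`: because `ι_{b[j]} = ι_b · (-1)^(j+1)`, the sign is kept by the two outer
children and flipped by the middle child. -/
def nodeSign (σ : ℤ) (p : List (Fin 3)) : ℤ := σ * (-1) ^ (p.count (1 : Fin 3))

/-- Nodes of a couple: `(true, p)` is the node at path `p` of the positive tree `τ⁺`,
and `(false, p)` is the node at path `p` of the negative tree `τ⁻`. -/
abbrev CNode : Type := Bool × List (Fin 3)

/-- The (raw data of a) couple `(τ⁺, τ⁻, ℘)`: a positive tree `tp`, a negative tree `tm`,
the pairing `pr` sending each leaf of `tp` to its partner leaf of `tm`, and the inverse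
pairing `pl`. -/
structure Couple : Type where
  tp : TTree
  tm : TTree
  pr : List (Fin 3) → List (Fin 3)
  pl : List (Fin 3) → List (Fin 3)

namespace Couple

/-- The tree of the given side of the couple (`true` ↦ positive tree). -/
def tree (q : Couple) (b : Bool) : TTree := if b then q.tp else q.tm

/-- The sign of a node of a couple (the root of `τ⁺` has sign `+1`, that of `τ⁻` has
sign `-1`). -/
def sign (x : CNode) : ℤ := nodeSign (if x.1 then 1 else -1) x.2

/-- `x` is a node of the couple `q`. -/
def isNode (q : Couple) (x : CNode) : Prop := (q.tree x.1).valid x.2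

/-- `x` is a leaf of the couple `q`. -/
def isLeafN (q : Couple) (x : CNode) : Prop := (q.tree x.1).isLeaf x.2

/-- `x` is a branching node of the couple `q`. -/
def isBranchN (q : Couple) (x : CNode) : Prop := (q.tree x.1).isBranch x.2

/-- Well-formedness of a couple: the two trees have the same order; `pr` is a bijection
(with inverse `pl`) from the leaves of the positive tree onto the leaves of the negative
tree, pairing leaves of opposite signs.  The fields `pr_norm` and `pl_norm` normalize the
(irrelevant) values of `pr` and `pl` off their domains, so that equality of raw couples
is equality of couples. -/
structure IsCouple (q : Couple) : Prop where
  order_eq : q.tp.order = q.tm.order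
  pr_leaf : ∀ l, q.tp.isLeaf l → q.tm.isLeaf (q.pr l)
  pl_leaf : ∀ l, q.tm.isLeaf l → q.tp.isLeaf (q.pl l)
  pl_pr : ∀ l, q.tp.isLeaf l → q.pl (q.pr l) = l
  pr_pl : ∀ l, q.tm.isLeaf l → q.pr (q.pl l) = l
  sign_pr : ∀ l, q.tp.isLeaf l → sign (false, q.pr l) = - sign (true, l)
  pr_norm : ∀ l, ¬ q.tp.isLeaf l → q.pr l = []
  pl_norm : ∀ l, ¬ q.tm.isLeaf l → q.pl l = []

/-- The set `A_p` attached to the leaf pair `p = {(true, l), (false, q.pr l)}`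
(indexed by the leaf `l` of the positive tree): the set of all nodes `m` of `q` with
`m ⪰ (true, l)` or `m ⪰ (false, q.pr l)`, i.e. all weak ancestors of the two
paired leaves. -/
def pairSet (q : Couple) (l : List (Fin 3)) : Set CNode :=
  {x | (x.1 = true ∧ x.2 <+: l) ∨ (x.1 = false ∧ x.2 <+: q.pr l)}

/-- Two nodes `x, y` of `q` are conjugate, `x ∼ y`, if for every leaf pair `p ∈ ℘`
either both belong to `A_p` or neither does. -/
def Conj (q : Couple) (x y : CNode) : Prop :=
  ∀ l, q.tp.isLeaf l →
    ((x ∈ q.pairSet l ∧ y ∈ q.pairSet l) ∨ (x ∉ q.pairSet l ∧ y ∉ q.pairSet l))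

/-- The leaf of the leaf pair indexed by the `tp`-leaf `l` carrying the sign `+1`. -/
def posLeaf (q : Couple) (l : List (Fin 3)) : CNode :=
  if sign (true, l) = 1 then ((true, l) : CNode) else ((false, q.pr l) : CNode)

/-- The leaf of the leaf pair indexed by the `tp`-leaf `l` carrying the sign `-1`. -/
def negLeaf (q : Couple) (l : List (Fin 3)) : CNode :=
  if sign (true, l) = 1 then ((false, q.pr l) : CNode) else ((true, l) : CNode)

end Couple

/-- `x` is a weak ancestor of `y` (i.e. `x ⪰ y` fails ... this states `y ⪯ x` in the
subtree order: `y` lies in the subtree rooted at `x`), as nodes of a couple. -/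
def anc (x y : CNode) : Prop := x.1 = y.1 ∧ x.2 <+: y.2

/-- The indicator `1_{x ⪰ y}` (i.e. `x` is a weak ancestor of `y`), with values in `ℤ`. -/
def ind1 (x y : CNode) : ℤ := if anc x y then 1 else 0


/-! ### Auxiliary lemmas -/

theorem TTree.sub_append (t : TTree) (p q : List (Fin 3)) :
    t.sub (p ++ q) = (t.sub p).bind (fun s => s.sub q) := by
  induction p generalizing t with
  | nil => simp [TTree.sub]
  | cons i p ih =>
    cases t with
    | leaf => simp [TTree.sub]
    | node a b c => simp only [List.cons_append, TTree.sub]; exact ih _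

theorem TTree.exists_leaf' (t : TTree) : ∃ m, t.isLeaf m := by
  induction t with
  | leaf => exact ⟨[], rfl⟩
  | node a b c iha ihb ihc =>
    obtain ⟨m, hm⟩ := iha
    exact ⟨(0 : Fin 3) :: m, by simpa [TTree.isLeaf, TTree.sub] using hm⟩

theorem TTree.leaf_ext (t : TTree) (p : List (Fin 3)) (hp : t.valid p) :
    ∃ l, p <+: l ∧ t.isLeaf l := by
  rw [TTree.valid, Option.isSome_iff_exists] at hp
  obtain ⟨s, hs⟩ := hp
  obtain ⟨m, hm⟩ := s.exists_leaf'
  exact ⟨p ++ m, ⟨m, rfl⟩, by rw [TTree.isLeaf, TTree.sub_append, hs]; exact hm⟩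

theorem TTree.leaf_incomp {t : TTree} {l l' : List (Fin 3)} (h : t.isLeaf l)
    (h' : t.isLeaf l') (hpre : l <+: l') : l = l' := by
  obtain ⟨m, rfl⟩ := hpre
  cases m with
  | nil => simp
  | cons i m =>
    rw [TTree.isLeaf, TTree.sub_append, h] at h'
    simp [TTree.sub] at h'

theorem pair_lemma {α β γ : Type*} (P : Set α) (φ : α → β) (ψ : α → γ)
    (h1 : ∃ a ∈ P, ∃ b ∈ P, φ a ≠ φ b) (h2 : ∃ a ∈ P, ∃ b ∈ P, ψ a ≠ ψ b) :
    ∃ a ∈ P, ∃ b ∈ P, φ a ≠ φ b ∧ ψ a ≠ ψ b := by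
  obtain ⟨a, ha, b, hb, hab⟩ := h1
  obtain ⟨u, hu, v, hv, huv⟩ := h2
  by_cases h : ψ a = ψ b
  · by_cases hua : φ u = φ a
    · by_cases hub : ψ u = ψ b
      · have hva : ψ v ≠ ψ a := fun e => huv (by rw [hub, ← h, ← e])
        have hvb : ψ v ≠ ψ b := fun e => huv (by rw [hub, ← e])
        by_cases hfa : φ v = φ a
        · exact ⟨v, hv, b, hb, by rw [hfa]; exact hab, hvb⟩
        · exact ⟨v, hv, a, ha, hfa, hva⟩
      · exact ⟨u, hu, b, hb, by rw [hua]; exact hab, hub⟩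
    · by_cases hua' : ψ u = ψ a
      · have hva : ψ v ≠ ψ a := fun e => huv (by rw [hua', ← e])
        have hvb : ψ v ≠ ψ b := fun e => huv (by rw [hua', h, ← e])
        by_cases hfa : φ v = φ a
        · exact ⟨v, hv, b, hb, by rw [hfa]; exact hab, hvb⟩
        · exact ⟨v, hv, a, ha, hfa, hva⟩
      · exact ⟨u, hu, a, ha, hua, hua'⟩
  · exact ⟨a, ha, b, hb, hab, h⟩

theorem lcp_lemma (S : Set (List (Fin 3)))
    (hinc : ∀ a ∈ S, ∀ b ∈ S, a <+: b → a = b)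
    (hnontriv : ∃ a ∈ S, ∃ b ∈ S, a ≠ b) :
    ∃ k : ℕ, (∃ a ∈ S, ∃ b ∈ S, a.take (k+1) ≠ b.take (k+1)) ∧
      (∀ a ∈ S, ∀ b ∈ S, a.take (k+1) ≠ b.take (k+1) →
        ∀ p, p <+: a → p <+: b → ∀ x ∈ S, p <+: x) := by
  obtain ⟨a₀, ha₀, b₀, hb₀, hab₀⟩ := hnontriv
  set good : ℕ → Prop := fun n => ∀ x ∈ S, a₀.take n <+: x with hgood
  have good0 : good 0 := fun x _ => by simp
  set k : ℕ := Nat.findGreatest good a₀.length with hk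
  have hkgood : good k := Nat.findGreatest_spec (Nat.zero_le _) good0
  have hkle : k ≤ a₀.length := Nat.findGreatest_le _
  have hklt : k < a₀.length := by
    rcases lt_or_eq_of_le hkle with h | h
    · exact h
    · exfalso
      have := hkgood b₀ hb₀
      rw [h, List.take_length] at this
      exact hab₀ (hinc a₀ ha₀ b₀ hb₀ this)
  have hnotgood : ¬ good (k+1) :=
    Nat.findGreatest_is_greatest (Nat.lt_succ_self k) hklt
  have hlen : (a₀.take k).length = k := by
    rw [List.length_take]; exact min_eq_left hkle
  have hxlen : ∀ x ∈ S, k < x.length := by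
    intro x hx
    have hpre := hkgood x hx
    have hle : k ≤ x.length := by
      have := hpre.length_le; rwa [hlen] at this
    rcases lt_or_eq_of_le hle with h | h
    · exact h
    · exfalso
      have hxeq : a₀.take k = x := hpre.eq_of_length (by rw [hlen, h])
      have : x <+: a₀ := hxeq ▸ List.take_prefix k a₀
      have hxa : x = a₀ := hinc x hx a₀ ha₀ this
      rw [hxa] at h
      omega
  have htake : ∀ x ∈ S, x.take k = a₀.take k := by
    intro x hx
    have hpre := hkgood x hx
    have := List.prefix_iff_eq_take.1 hpre
    rw [hlen] at this
    exact this.symm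
  refine ⟨k, ?_, ?_⟩
  · simp only [hgood] at hnotgood
    push_neg at hnotgood
    obtain ⟨b, hb, hnb⟩ := hnotgood
    refine ⟨a₀, ha₀, b, hb, fun e => hnb ?_⟩
    rw [e]; exact List.take_prefix _ _
  · intro a ha b hb hne p hpa hpb x hx
    by_cases hp : p.length ≤ k
    · have h1 : p = a.take p.length := List.prefix_iff_eq_take.1 hpa
      have h2 : p <+: a.take k := by
        rw [h1]
        calc a.take p.length = (a.take k).take p.length := by
              rw [List.take_take, min_eq_left hp]
          _ <+: a.take k := List.take_prefix _ _
      rw [htake a ha] at h2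
      exact h2.trans (hkgood x hx)
    · exfalso
      push_neg at hp
      have key : ∀ c, p <+: c → c.take (k+1) = p.take (k+1) := by
        intro c hpc
        have h1 : p.take (k+1) <+: c := (List.take_prefix _ _).trans hpc
        have := List.prefix_iff_eq_take.1 h1
        rw [List.length_take, min_eq_left (by omega : k + 1 ≤ p.length)] at this
        exact this.symm
      exact hne ((key a hpa).trans (key b hpb).symm)

/-- Any nonempty intersection of the sets `A_p`, `p ∈ ℘`, is the
intersection of just two of them; consequently
`U^q = {A_{p₁} ∩ A_{p₂} : p₁, p₂ ∈ ℘}` is a base of the topology on the nodes of `q`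
generated by the sets `A_p`. -/
theorem statement5 (q : Couple) (hq : q.IsCouple) :
    (∀ P : Set (List (Fin 3)), P.Nonempty → (∀ l ∈ P, q.tp.isLeaf l) →
      ∃ l₁ l₂, q.tp.isLeaf l₁ ∧ q.tp.isLeaf l₂ ∧
        (⋂ l ∈ P, q.pairSet l) = q.pairSet l₁ ∩ q.pairSet l₂) ∧
    @TopologicalSpace.IsTopologicalBasis {x : CNode // q.isNode x}
      (TopologicalSpace.generateFrom
        {S | ∃ l, q.tp.isLeaf l ∧ S = {x : {x : CNode // q.isNode x} | x.1 ∈ q.pairSet l}})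
      {S | ∃ l₁ l₂, q.tp.isLeaf l₁ ∧ q.tp.isLeaf l₂ ∧
        S = {x : {x : CNode // q.isNode x} | x.1 ∈ q.pairSet l₁ ∩ q.pairSet l₂}}:= by
  have part1 : ∀ P : Set (List (Fin 3)), P.Nonempty → (∀ l ∈ P, q.tp.isLeaf l) →
      ∃ l₁ l₂, q.tp.isLeaf l₁ ∧ q.tp.isLeaf l₂ ∧
        (⋂ l ∈ P, q.pairSet l) = q.pairSet l₁ ∩ q.pairSet l₂ := by
    intro P hPne hPleaf
    obtain ⟨l₀, hl₀⟩ := hPne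
    by_cases hsing : ∀ l ∈ P, l = l₀
    · refine ⟨l₀, l₀, hPleaf _ hl₀, hPleaf _ hl₀, ?_⟩
      ext x
      simp only [Set.mem_iInter, Set.mem_inter_iff, and_self]
      constructor
      · intro h; exact h l₀ hl₀
      · intro h l hl; rw [hsing l hl]; exact h
    · push_neg at hsing
      obtain ⟨l', hl', hl'ne⟩ := hsing
      have hincP : ∀ a ∈ P, ∀ b ∈ P, a <+: b → a = b := fun a ha b hb h =>
        TTree.leaf_incomp (hPleaf a ha) (hPleaf b hb) h
      obtain ⟨k, hk1, hk2⟩ := lcp_lemma P hincP ⟨l', hl', l₀, hl₀, hl'ne⟩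
      have hincM : ∀ a ∈ q.pr '' P, ∀ b ∈ q.pr '' P, a <+: b → a = b := by
        rintro a ⟨la, hla, rfl⟩ b ⟨lb, hlb, rfl⟩ h
        exact TTree.leaf_incomp (hq.pr_leaf la (hPleaf la hla))
          (hq.pr_leaf lb (hPleaf lb hlb)) h
      have hprne : q.pr l' ≠ q.pr l₀ := by
        intro e
        apply hl'ne
        have := congrArg q.pl e
        rwa [hq.pl_pr l' (hPleaf l' hl'), hq.pl_pr l₀ (hPleaf l₀ hl₀)] at this
      obtain ⟨k', hk1', hk2'⟩ := lcp_lemma (q.pr '' P) hincM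
        ⟨q.pr l', ⟨l', hl', rfl⟩, q.pr l₀, ⟨l₀, hl₀, rfl⟩, hprne⟩
      have hk1'' : ∃ a ∈ P, ∃ b ∈ P, (q.pr a).take (k'+1) ≠ (q.pr b).take (k'+1) := by
        obtain ⟨a, ⟨la, hla, rfl⟩, b, ⟨lb, hlb, rfl⟩, h⟩ := hk1'
        exact ⟨la, hla, lb, hlb, h⟩
      obtain ⟨l₁, hl₁, l₂, hl₂, hd1, hd2⟩ := pair_lemma P (fun l => l.take (k+1))
        (fun l => (q.pr l).take (k'+1)) hk1 hk1''
      refine ⟨l₁, l₂, hPleaf _ hl₁, hPleaf _ hl₂, ?_⟩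
      ext x
      simp only [Set.mem_iInter, Set.mem_inter_iff]
      constructor
      · intro h; exact ⟨h l₁ hl₁, h l₂ hl₂⟩
      · rintro ⟨h1, h2⟩ l hl
        rcases h1 with ⟨hx1, hp1⟩ | ⟨hx1, hp1⟩ <;>
          rcases h2 with ⟨hx2, hp2⟩ | ⟨hx2, hp2⟩
        · exact Or.inl ⟨hx1, hk2 l₁ hl₁ l₂ hl₂ hd1 x.2 hp1 hp2 l hl⟩
        · rw [hx1] at hx2; simp at hx2
        · rw [hx1] at hx2; simp at hx2
        · exact Or.inr ⟨hx1, hk2' (q.pr l₁) ⟨l₁, hl₁, rfl⟩ (q.pr l₂) ⟨l₂, hl₂, rfl⟩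
            hd2 x.2 hp1 hp2 (q.pr l) ⟨l, hl, rfl⟩⟩
  refine ⟨part1, @TopologicalSpace.IsTopologicalBasis.mk _
    (TopologicalSpace.generateFrom
      {S | ∃ l, q.tp.isLeaf l ∧ S = {x : {x : CNode // q.isNode x} | x.1 ∈ q.pairSet l}})
    _ ?_ ?_ ?_⟩
  · -- exists_subset_inter
    rintro t₁ ⟨a, b, hla, hlb, rfl⟩ t₂ ⟨c, d, hlc, hld, rfl⟩ x hx
    have hP : ∀ l ∈ ({a, b, c, d} : Set (List (Fin 3))), q.tp.isLeaf l := by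
      rintro l (rfl | rfl | rfl | rfl) <;> assumption
    obtain ⟨l₁, l₂, hL1, hL2, heq⟩ := part1 {a, b, c, d} ⟨a, by simp⟩ hP
    have hset : q.pairSet l₁ ∩ q.pairSet l₂ =
        (q.pairSet a ∩ q.pairSet b) ∩ (q.pairSet c ∩ q.pairSet d) := by
      rw [← heq]
      ext y
      simp only [Set.mem_iInter, Set.mem_inter_iff, Set.mem_insert_iff,
        Set.mem_singleton_iff]
      constructor
      · intro h
        exact ⟨⟨h a (Or.inl rfl), h b (Or.inr (Or.inl rfl))⟩,
          h c (Or.inr (Or.inr (Or.inl rfl))), h d (Or.inr (Or.inr (Or.inr rfl)))⟩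
      · rintro ⟨⟨h1, h2⟩, h3, h4⟩ l (rfl | rfl | rfl | rfl) <;> assumption
    have hts : {y : {x : CNode // q.isNode x} | y.1 ∈ q.pairSet l₁ ∩ q.pairSet l₂} =
        {y : {x : CNode // q.isNode x} | y.1 ∈ q.pairSet a ∩ q.pairSet b} ∩
        {y : {x : CNode // q.isNode x} | y.1 ∈ q.pairSet c ∩ q.pairSet d} := by
      ext y
      simp only [Set.mem_setOf_eq, Set.mem_inter_iff, hset]
    exact ⟨_, ⟨l₁, l₂, hL1, hL2, rfl⟩, hts ▸ hx, hts ▸ subset_rfl⟩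
  · -- covering
    apply Set.eq_univ_of_forall
    rintro ⟨⟨bb, p⟩, hx⟩
    cases bb with
    | true =>
      obtain ⟨l, hpl, hleaf⟩ := TTree.leaf_ext q.tp p hx
      refine ⟨{y | y.1 ∈ q.pairSet l ∩ q.pairSet l}, ⟨l, l, hleaf, hleaf, rfl⟩, ?_⟩
      exact ⟨Or.inl ⟨rfl, hpl⟩, Or.inl ⟨rfl, hpl⟩⟩
    | false =>
      obtain ⟨lm, hpl, hleafm⟩ := TTree.leaf_ext q.tm p hx
      have hleaf : q.tp.isLeaf (q.pl lm) := hq.pl_leaf lm hleafm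
      have hpr : q.pr (q.pl lm) = lm := hq.pr_pl lm hleafm
      refine ⟨{y | y.1 ∈ q.pairSet (q.pl lm) ∩ q.pairSet (q.pl lm)},
        ⟨q.pl lm, q.pl lm, hleaf, hleaf, rfl⟩, ?_⟩
      exact ⟨Or.inr ⟨rfl, by rw [hpr]; exact hpl⟩, Or.inr ⟨rfl, by rw [hpr]; exact hpl⟩⟩
  · -- eq_generateFrom
    refine le_antisymm (le_generateFrom ?_)
      (TopologicalSpace.generateFrom_anti ?_)
    · rintro s ⟨l₁, l₂, h1, h2, rfl⟩
      have he : {x : {x : CNode // q.isNode x} | x.1 ∈ q.pairSet l₁ ∩ q.pairSet l₂} =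
          {x : {x : CNode // q.isNode x} | x.1 ∈ q.pairSet l₁} ∩
          {x : {x : CNode // q.isNode x} | x.1 ∈ q.pairSet l₂} := rfl
      rw [he]
      exact TopologicalSpace.GenerateOpen.inter _ _
        (TopologicalSpace.GenerateOpen.basic _ ⟨l₁, h1, rfl⟩)
        (TopologicalSpace.GenerateOpen.basic _ ⟨l₂, h2, rfl⟩)
    · rintro s ⟨l, hl, rfl⟩
      exact ⟨l, l, hl, hl, by rw [Set.inter_self]⟩


end WickNLS

end
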